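/- Let p be an odd prime, v ∈ ℚ_p a p-adic unit that is not a square in ℚ_p, A = diag(1, -v, p), Q_+(x) = xᵀAx and B(x,y) = xᵀAy. Let (g, h, n) be a basis of ℚ_p³ that is pairwise orthogonal with respect to B. Then Q_+(g) ≠ 0, and −Q_+(h)/Q_+(g) is not a square in ℚ_p; equivalently, there is no s ∈ ℚ_p with Q_+(g)·s² = −Q_+(h). -/

import Mathlib

/-!
By Hensel's lemma a `p`-adic unit that is a square modulo an odd `p` is a square. Hence for a
nonsquare unit `v` nothing cancels in `x² - v y²`: its norm is `max(‖x‖, ‖y‖)²`, an even power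
of `p`, while `‖p z²‖` is an odd power of `p`, so `x² - v y² + p z²` is anisotropic. If
`Q₊(g) s² = -Q₊(h)`, orthogonality gives `Q₊(s g + h) = s² Q₊(g) + Q₊(h) = 0`, so `s g + h = 0`,
contradicting the linear independence of `g` and `h`.
-/

theorem QuadraticMap.Anisotropic.not_exists_mul_sq_eq_neg {R M : Type*} [CommRing R]
    [Nontrivial R] [AddCommGroup M] [Module R M] {Q : QuadraticMap R M R} (hQ : Q.Anisotropic)
    {g h : M} (hli : LinearIndependent R ![g, h]) (hpolar : QuadraticMap.polar Q g h = 0) :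
    ¬∃ s, Q g * s ^ 2 = -Q h := by
  rintro ⟨s, hs⟩
  have hzero : Q (s • g + h) = 0 := by
    rw [QuadraticMap.map_add Q, QuadraticMap.map_smul, QuadraticMap.polar_smul_left, hpolar,
      smul_eq_mul, smul_zero]
    linear_combination hs
  exact one_ne_zero (LinearIndependent.pair_iff.mp hli s 1 (by simpa using hQ _ hzero)).2

open Polynomial in
theorem PadicInt.isSquare_of_norm_sq_sub_lt_one {p : ℕ} [Fact p.Prime] (hp : p ≠ 2)
    {u v : ℤ_[p]} (hu : ‖u‖ = 1) (huv : ‖u ^ 2 - v‖ < 1) : IsSquare v := by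
  have h2 : ‖(2 : ℤ_[p])‖ = 1 := by
    exact_mod_cast PadicInt.norm_natCast_eq_one_iff.mpr
      ((Nat.coprime_primes Fact.out Nat.prime_two).mpr hp)
  have hF : ‖aeval u (X ^ 2 - C v)‖ < ‖aeval u (derivative (X ^ 2 - C v))‖ ^ 2 := by
    simpa [norm_mul, one_add_one_eq_two, h2, hu] using huv
  obtain ⟨z, hz, -⟩ := hensels_lemma hF
  exact ⟨z, by simpa [sub_eq_zero, sq, eq_comm] using hz⟩

namespace Padic

variable {p : ℕ} [Fact p.Prime]

theorem norm_sq_sub_eq_one_of_not_isSquare (hp : p ≠ 2) {v : ℚ_[p]} (hv : ‖v‖ ≤ 1)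
    (hvsq : ¬IsSquare v) {t : ℚ_[p]} (ht : ‖t‖ = 1) : ‖t ^ 2 - v‖ = 1 := by
  refine le_antisymm ?_ (not_lt.mp fun hlt => hvsq ?_)
  · calc ‖t ^ 2 - v‖ ≤ max ‖t ^ 2‖ ‖v‖ := by
          simpa only [sub_eq_add_neg, norm_neg] using nonarchimedean (t ^ 2) (-v)
      _ ≤ 1 := by simp [norm_pow, ht, hv]
  · exact (PadicInt.isSquare_of_norm_sq_sub_lt_one hp (u := ⟨t, ht.le⟩) (v := ⟨v, hv⟩) ht
      hlt).map PadicInt.Coe.ringHom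

theorem norm_sq_sub_mul_sq (hp : p ≠ 2) {v : ℚ_[p]} (hv : ‖v‖ = 1) (hvsq : ¬IsSquare v)
    (x y : ℚ_[p]) : ‖x ^ 2 - v * y ^ 2‖ = max (‖x‖ ^ 2) (‖y‖ ^ 2) := by
  by_cases hxy : ‖x‖ = ‖y‖
  · rcases eq_or_ne y 0 with rfl | hy
    · simp_all
    have hxy' : ‖x / y‖ = 1 := by rw [norm_div, hxy, div_self (norm_ne_zero_iff.mpr hy)]
    calc ‖x ^ 2 - v * y ^ 2‖ = ‖(x / y) ^ 2 - v‖ * ‖y‖ ^ 2 := by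
          rw [← norm_pow, ← norm_mul]; congr 1; field_simp
      _ = max (‖x‖ ^ 2) (‖y‖ ^ 2) := by
          rw [norm_sq_sub_eq_one_of_not_isSquare hp hv.le hvsq hxy', hxy, max_self, one_mul]
  · have hne : ‖x ^ 2‖ ≠ ‖-(v * y ^ 2)‖ := by
      simpa [norm_pow, hv, pow_left_inj₀ (norm_nonneg _) (norm_nonneg _) two_ne_zero] using hxy
    simpa [sub_eq_add_neg, norm_pow, hv] using add_eq_max_of_ne hne

theorem norm_p_ne_norm_sq (c : ℚ_[p]) : ‖(p : ℚ_[p])‖ ≠ ‖c‖ ^ 2 := by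
  have hp : (1 : ℝ) < p := mod_cast (Fact.out : p.Prime).one_lt
  rcases eq_or_ne c 0 with rfl | hc
  · simp [(Fact.out : p.Prime).ne_zero]
  intro h
  rw [norm_p, norm_eq_zpow_neg_valuation hc, ← _root_.zpow_neg_one, ← zpow_natCast,
    ← zpow_mul] at h
  have := zpow_right_injective₀ (by positivity) hp.ne' h
  omega

theorem eq_zero_of_sq_sub_mul_sq_add_p_mul_sq_eq_zero (hp : p ≠ 2) {v : ℚ_[p]} (hv : ‖v‖ = 1)
    (hvsq : ¬IsSquare v) {x y z : ℚ_[p]} (h : x ^ 2 - v * y ^ 2 + p * z ^ 2 = 0) :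
    x = 0 ∧ y = 0 ∧ z = 0 := by
  have hnorm : max (‖x‖ ^ 2) (‖y‖ ^ 2) = ‖(p : ℚ_[p])‖ * ‖z‖ ^ 2 := by
    rw [← norm_sq_sub_mul_sq hp hv hvsq, eq_neg_of_add_eq_zero_left h, norm_neg, norm_mul,
      norm_pow]
  obtain rfl : z = 0 := by
    by_contra hz
    obtain ⟨w, hw⟩ : ∃ w : ℚ_[p], max (‖x‖ ^ 2) (‖y‖ ^ 2) = ‖w‖ ^ 2 :=
      (max_choice _ _).elim (⟨x, ·⟩) (⟨y, ·⟩)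
    apply norm_p_ne_norm_sq (w / z)
    rw [norm_div, div_pow, ← hw, hnorm, mul_div_cancel_right₀ _ (by simpa using hz)]
  have hx : ‖x‖ ^ 2 ≤ 0 := by simpa using (le_max_left _ _).trans hnorm.le
  have hy : ‖y‖ ^ 2 ≤ 0 := by simpa using (le_max_right _ _).trans hnorm.le
  exact ⟨by simpa using hx, by simpa using hy, rfl⟩

theorem anisotropic_weightedSumSquares (hp : p ≠ 2) {v : ℚ_[p]} (hv : ‖v‖ = 1)
    (hvsq : ¬IsSquare v) :
    (QuadraticMap.weightedSumSquares ℚ_[p] ![1, -v, (p : ℚ_[p])]).Anisotropic := by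
  intro x hx
  simp [QuadraticMap.weightedSumSquares_apply, Fin.sum_univ_three] at hx
  obtain ⟨h0, h1, h2⟩ := eq_zero_of_sq_sub_mul_sq_add_p_mul_sq_eq_zero hp hv hvsq
    (x := x 0) (y := x 1) (z := x 2) (by linear_combination hx)
  ext i; fin_cases i <;> assumption

end Padic

theorem neg_alpha_not_square_general
    (p : ℕ) [Fact p.Prime] (hp : p ≠ 2)
    (v : ℚ_[p]) (hv : ‖v‖ = 1) (hvsq : ¬ IsSquare v)
    (A : Matrix (Fin 3) (Fin 3) ℚ_[p])
    (hA : A = Matrix.diagonal ![1, -v, (p : ℚ_[p])])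
    (Q : (Fin 3 → ℚ_[p]) → ℚ_[p]) (hQ : ∀ z, Q z = z ⬝ᵥ A.mulVec z)
    (B : (Fin 3 → ℚ_[p]) → (Fin 3 → ℚ_[p]) → ℚ_[p])
    (hB : ∀ z w, B z w = z ⬝ᵥ A.mulVec w)
    (g h n : Fin 3 → ℚ_[p])
    (hbasis : LinearIndependent ℚ_[p] ![g, h, n])
    (hgh : B g h = 0) :
    Q g ≠ 0 ∧ ¬ IsSquare (-(Q h) / Q g) ∧ ¬ ∃ s : ℚ_[p], Q g * s ^ 2 = -(Q h) := by
  set W := QuadraticMap.weightedSumSquares ℚ_[p] ![1, -v, (p : ℚ_[p])]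
  have hW : W.Anisotropic := Padic.anisotropic_weightedSumSquares hp hv hvsq
  have hQW : ∀ z, Q z = W z := fun z => by
    simp [hQ, hA, W, QuadraticMap.weightedSumSquares_apply, dotProduct, Matrix.mulVec_diagonal,
      Fin.sum_univ_three]
    ring
  have hpolar : QuadraticMap.polar W g h = 2 * B g h := by
    simp [QuadraticMap.polar, ← hQW, hQ, hB, hA, dotProduct, Matrix.mulVec_diagonal,
      Fin.sum_univ_three]
    ring
  have hli : LinearIndependent ℚ_[p] ![g, h] := by
    have hcomp : ![g, h, n] ∘ Fin.castSucc = ![g, h] := by ext i : 1; fin_cases i <;> rfl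
    exact hcomp ▸ hbasis.comp _ (Fin.castSucc_injective 2)
  have hQg : Q g ≠ 0 := by
    rw [hQW]; exact fun h0 => hbasis.ne_zero 0 (hW g h0)
  have hno : ¬∃ s, Q g * s ^ 2 = -Q h := by
    simpa only [hQW] using hW.not_exists_mul_sq_eq_neg hli (by rw [hpolar, hgh, mul_zero])
  refine ⟨hQg, fun ⟨r, hr⟩ => hno ⟨r, ?_⟩, hno⟩
  rw [div_eq_iff hQg] at hr
  linear_combination -hr

/-- For any orthogonal basis `(g, h, n)` of `ℚ_p³` w.r.t. the form
with Gram matrix `A = diag(1, -v, p)`: `Q₊(g) ≠ 0` and `-Q₊(h)/Q₊(g)` is not a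
square; equivalently there is no `s` with `Q₊(g)·s² = -Q₊(h)`. -/
theorem neg_alpha_not_square
    (p : ℕ) [Fact p.Prime] (hp : p ≠ 2)
    (v : ℚ_[p]) (hv : ‖v‖ = 1) (hvsq : ¬ IsSquare v)
    (A : Matrix (Fin 3) (Fin 3) ℚ_[p])
    (hA : A = Matrix.diagonal ![1, -v, (p : ℚ_[p])])
    (Q : (Fin 3 → ℚ_[p]) → ℚ_[p]) (hQ : ∀ z, Q z = z ⬝ᵥ A.mulVec z)
    (B : (Fin 3 → ℚ_[p]) → (Fin 3 → ℚ_[p]) → ℚ_[p])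
    (hB : ∀ z w, B z w = z ⬝ᵥ A.mulVec w)
    (g h n : Fin 3 → ℚ_[p])
    (hbasis : LinearIndependent ℚ_[p] ![g, h, n])
    (hgh : B g h = 0) (hgn : B g n = 0) (hhn : B h n = 0) :
    Q g ≠ 0 ∧ ¬ IsSquare (-(Q h) / Q g) ∧ ¬ ∃ s : ℚ_[p], Q g * s ^ 2 = -(Q h) :=
  neg_alpha_not_square_general p hp v hv hvsq A hA Q hQ B hB g h n hbasis hgh
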